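/- Let $\mathcal{T}_1, \dots, \mathcal{T}_m$ be the layers of a layered network (clusters of a GTSP tour) with edge weights $w$, and let $T_1 \to T_2 \to \cdots \to T_m \to T_1$ (with $T_i \in \mathcal{T}_i$) be a shortest cycle through all the layers in this order. Then for any $a < b$, the weight of the shortest path from any vertex in $\mathcal{T}_a$ to any vertex in $\mathcal{T}_b$ through layers $\mathcal{T}_{a+1}, \dots, \mathcal{T}_{b-1}$ in order is at least $w(T_a \to T_{a+1} \to \cdots \to T_b) - w_{\max}(T_a \to \mathcal{T}_{a+1}) - w_{\max}(\mathcal{T}_{b-1} \to T_b) + w_{\min}(\mathcal{T}_a \to \mathcal{T}_{a+1}) + w_{\min}(\mathcal{T}_{b-1} \to \mathcal{T}_b)$. -/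
import Mathlib

/-- The weight of the cyclic tour `T_0 → T_1 → ⋯ → T_{m-1} → T_0`. -/
def cycleWeight {V : Type*} (m : ℕ) (w : V → V → ℝ) (T : ℕ → V) : ℝ :=
  ∑ i ∈ Finset.range m, w (T i) (T ((i + 1) % m))

/-- `w_min(X → Y)`: the minimum weight of an edge from `X` to `Y`. -/
noncomputable def wmin {V : Type*} (w : V → V → ℝ) (X Y : Finset V) : ℝ :=
  sInf {r : ℝ | ∃ x ∈ X, ∃ y ∈ Y, r = w x y}

/-- `w_max(X → Y)`: the maximum weight of an edge from `X` to `Y`. -/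
noncomputable def wmax {V : Type*} (w : V → V → ℝ) (X Y : Finset V) : ℝ :=
  sSup {r : ℝ | ∃ x ∈ X, ∃ y ∈ Y, r = w x y}

lemma edgeSet_finite {V : Type*} (w : V → V → ℝ) (X Y : Finset V) :
    {r : ℝ | ∃ x ∈ X, ∃ y ∈ Y, r = w x y}.Finite := by
  apply Set.Finite.subset ((X ×ˢ Y).finite_toSet.image fun p => w p.1 p.2)
  rintro r ⟨x, hx, y, hy, rfl⟩
  exact ⟨(x, y), Finset.mem_coe.mpr (Finset.mem_product.mpr ⟨hx, hy⟩), rfl⟩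

lemma wmin_le {V : Type*} (w : V → V → ℝ) {X Y : Finset V} {x y : V}
    (hx : x ∈ X) (hy : y ∈ Y) : wmin w X Y ≤ w x y :=
  csInf_le (edgeSet_finite w X Y).bddBelow ⟨x, hx, y, hy, rfl⟩

lemma le_wmax {V : Type*} (w : V → V → ℝ) {X Y : Finset V} {x y : V}
    (hx : x ∈ X) (hy : y ∈ Y) : w x y ≤ wmax w X Y :=
  le_csSup (edgeSet_finite w X Y).bddAbove ⟨x, hx, y, hy, rfl⟩

/-- Let `𝒯_0, …, 𝒯_{m-1}` be the layers of a layered network and let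
`T_0 → ⋯ → T_{m-1} → T_0` be a shortest cycle through the layers (one vertex per layer, in
order).  Then for any `a < b < m`, every path from a vertex of `𝒯_a` to a vertex of `𝒯_b`
through the intermediate layers in order has weight at least
`w(T_a → ⋯ → T_b) - w_max(T_a → 𝒯_{a+1}) - w_max(𝒯_{b-1} → T_b)
  + w_min(𝒯_a → 𝒯_{a+1}) + w_min(𝒯_{b-1} → 𝒯_b)`. -/
theorem shortest_path_lower_bound {V : Type*} (m : ℕ) (𝒯 : ℕ → Finset V)
    (w : V → V → ℝ) (T : ℕ → V) (hT : ∀ i < m, T i ∈ 𝒯 i)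
    (hmin : ∀ c : ℕ → V, (∀ i < m, c i ∈ 𝒯 i) →
      cycleWeight m w T ≤ cycleWeight m w c)
    (a b : ℕ) (hab : a < b) (hbm : b < m)
    (c : ℕ → V) (hc : ∀ j, a ≤ j → j ≤ b → c j ∈ 𝒯 j) :
    (∑ j ∈ Finset.Ico a b, w (T j) (T (j + 1)))
        - wmax w {T a} (𝒯 (a + 1)) - wmax w (𝒯 (b - 1)) {T b}
        + wmin w (𝒯 a) (𝒯 (a + 1)) + wmin w (𝒯 (b - 1)) (𝒯 b) ≤
      ∑ j ∈ Finset.Ico a b, w (c j) (c (j + 1)) := by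
  set c' : ℕ → V := fun i => if a < i ∧ i < b then c i else T i with hc'def
  have hc' : ∀ i < m, c' i ∈ 𝒯 i := by
    intro i him
    simp only [hc'def]
    split
    · next h => exact hc i h.1.le h.2.le
    · exact hT i him
  have hsub : Finset.Ico a b ⊆ Finset.range m := by
    intro i hi
    simp only [Finset.mem_Ico] at hi
    exact Finset.mem_range.mpr (hi.2.trans hbm)
  -- decomposition of cycleWeight for cycles agreeing with T outside (a,b)
  have houter : ∀ d : ℕ → V, (∀ i, ¬(a < i ∧ i < b) → d i = T i) →
      cycleWeight m w d = (∑ j ∈ Finset.Ico a b, w (d j) (d (j + 1))) +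
        ∑ j ∈ Finset.range m \ Finset.Ico a b, w (T j) (T ((j + 1) % m)) := by
    intro d hd
    unfold cycleWeight
    rw [← Finset.sum_sdiff hsub, add_comm]
    congr 1
    · apply Finset.sum_congr rfl
      intro i hi
      simp only [Finset.mem_Ico] at hi
      rw [Nat.mod_eq_of_lt (by omega : i + 1 < m)]
    · apply Finset.sum_congr rfl
      intro i hi
      simp only [Finset.mem_sdiff, Finset.mem_range, Finset.mem_Ico] at hi
      have h1 : d i = T i := hd i (by omega)
      have h2 : d ((i + 1) % m) = T ((i + 1) % m) := by
        apply hd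
        rcases Nat.lt_or_ge (i + 1) m with h | h
        · rw [Nat.mod_eq_of_lt h]; omega
        · have him : i + 1 = m := by omega
          rw [him, Nat.mod_self]; omega
      rw [h1, h2]
  have hT' : ∀ i, ¬(a < i ∧ i < b) → T i = T i := fun _ _ => rfl
  have hcc' : ∀ i, ¬(a < i ∧ i < b) → c' i = T i := by
    intro i hi; simp only [hc'def, if_neg hi]
  have key : (∑ j ∈ Finset.Ico a b, w (T j) (T (j + 1))) ≤
      ∑ j ∈ Finset.Ico a b, w (c' j) (c' (j + 1)) := by
    have h := hmin c' hc'
    rw [houter T hT', houter c' hcc'] at h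
    linarith
  -- membership facts
  have hTa : T a ∈ 𝒯 a := hT a (by omega)
  have hTb : T b ∈ 𝒯 b := hT b hbm
  have hca : c a ∈ 𝒯 a := hc a le_rfl hab.le
  have hcb : c b ∈ 𝒯 b := hc b hab.le le_rfl
  rcases eq_or_lt_of_le (Nat.succ_le_of_lt hab) with hb1 | hb1
  · -- b = a + 1
    have hb : b = a + 1 := hb1.symm
    subst hb
    have hIco : Finset.Ico a (a + 1) = {a} := by simp
    rw [hIco, Finset.sum_singleton, Finset.sum_singleton] at *
    have e1 : w (T a) (T (a + 1)) ≤ wmax w {T a} (𝒯 (a + 1)) :=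
      le_wmax w (Finset.mem_singleton_self _) hTb
    have e2 : wmin w (𝒯 (a + 1 - 1)) (𝒯 (a + 1)) ≤ wmax w (𝒯 (a + 1 - 1)) {T (a + 1)} := by
      calc wmin w (𝒯 (a + 1 - 1)) (𝒯 (a + 1)) ≤ w (T a) (T (a + 1)) := by
            apply wmin_le w _ hTb
            simpa using hTa
        _ ≤ wmax w (𝒯 (a + 1 - 1)) {T (a + 1)} := by
            apply le_wmax w _ (Finset.mem_singleton_self _)
            simpa using hTa
    have e3 : wmin w (𝒯 a) (𝒯 (a + 1)) ≤ w (c a) (c (a + 1)) := wmin_le w hca hcb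
    linarith
  · -- a + 1 < b
    have hab1 : a + 1 ≤ b - 1 := by omega
    have hbb : b - 1 + 1 = b := by omega
    have hca1 : c (a + 1) ∈ 𝒯 (a + 1) := hc (a + 1) (by omega) (by omega)
    have hcb1 : c (b - 1) ∈ 𝒯 (b - 1) := hc (b - 1) (by omega) (by omega)
    have hsplit : ∀ d : ℕ → V, (∑ j ∈ Finset.Ico a b, w (d j) (d (j + 1))) =
        w (d a) (d (a + 1)) + (∑ j ∈ Finset.Ico (a + 1) (b - 1), w (d j) (d (j + 1)))
          + w (d (b - 1)) (d b) := by
      intro d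
      rw [Finset.sum_eq_sum_Ico_succ_bot hab]
      rw [show (Finset.Ico (a+1) b) = Finset.Ico (a+1) (b - 1 + 1) by rw [hbb]]
      rw [Finset.sum_Ico_succ_top hab1, hbb]
      ring
    rw [hsplit c', hsplit c] at *
    have hmid : (∑ j ∈ Finset.Ico (a + 1) (b - 1), w (c' j) (c' (j + 1))) =
        ∑ j ∈ Finset.Ico (a + 1) (b - 1), w (c j) (c (j + 1)) := by
      apply Finset.sum_congr rfl
      intro i hi
      simp only [Finset.mem_Ico] at hi
      have h1 : c' i = c i := by simp only [hc'def, if_pos (show a < i ∧ i < b by omega)]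
      have h2 : c' (i + 1) = c (i + 1) := by
        simp only [hc'def, if_pos (show a < i + 1 ∧ i + 1 < b by omega)]
      rw [h1, h2]
    have ea : c' a = T a := hcc' a (by omega)
    have ea1 : c' (a + 1) = c (a + 1) := by
      simp only [hc'def, if_pos (show a < a + 1 ∧ a + 1 < b by omega)]
    have eb1 : c' (b - 1) = c (b - 1) := by
      simp only [hc'def, if_pos (show a < b - 1 ∧ b - 1 < b by omega)]
    have eb : c' b = T b := hcc' b (by omega)
    rw [ea, ea1, eb1, eb, hmid] at key
    have e1 : w (T a) (c (a + 1)) ≤ wmax w {T a} (𝒯 (a + 1)) :=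
      le_wmax w (Finset.mem_singleton_self _) hca1
    have e2 : w (c (b - 1)) (T b) ≤ wmax w (𝒯 (b - 1)) {T b} :=
      le_wmax w hcb1 (Finset.mem_singleton_self _)
    have e3 : wmin w (𝒯 a) (𝒯 (a + 1)) ≤ w (c a) (c (a + 1)) := wmin_le w hca hca1
    have e4 : wmin w (𝒯 (b - 1)) (𝒯 b) ≤ w (c (b - 1)) (c b) := wmin_le w hcb1 hcb
    linarith
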